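/- Let A = (a_{ij}) be a real symmetric n×n matrix with positive diagonal entries such that √(a_{ii} a_{jj}) > (n-1)|a_{ij}| for all i ≠ j. Then A is positive definite. -/

import Mathlib

/-!
Rescale `A` by the congruence `D⁻¹ A D⁻¹` with `D = diag(√aᵢᵢ)`. The rescaled matrix has unit
diagonal and off-diagonal entries of absolute value `< 1/(n-1)`, so each of its rows is strictly
diagonally dominant; by Gershgorin's circle theorem its eigenvalues are positive.
-/

open Finset Matrix
open scoped ComplexOrder

theorem Matrix.IsHermitian.posDef_of_sum_norm_offDiag_lt {𝕜 n : Type*} [RCLike 𝕜] [Fintype n]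
    [DecidableEq n] {A : Matrix n n 𝕜} (hA : A.IsHermitian)
    (h : ∀ i, ∑ j ∈ univ.erase i, ‖A i j‖ < RCLike.re (A i i)) : A.PosDef := by
  refine hA.posDef_iff_eigenvalues_pos.mpr fun i => ?_
  have hμ : Module.End.HasEigenvalue (toLin' A) (hA.eigenvalues i : 𝕜) := by
    rw [Module.End.hasEigenvalue_iff_mem_spectrum, spectrum_toLin']
    exact spectrum.algebraMap_mem 𝕜 (hA.eigenvalues_mem_spectrum_real i)
  obtain ⟨k, hk⟩ := eigenvalue_mem_ball hμ
  rw [Metric.mem_closedBall, dist_comm, dist_eq_norm] at hk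
  have hre : RCLike.re (A k k) - hA.eigenvalues i ≤ ‖A k k - (hA.eigenvalues i : 𝕜)‖ := by
    simpa using RCLike.re_le_norm (A k k - (hA.eigenvalues i : 𝕜))
  linarith [h k]

theorem Matrix.PosDef.of_posDef_div_mul {n : Type*} [Fintype n] [DecidableEq n]
    {A : Matrix n n ℝ} {d : n → ℝ} (hd : ∀ i, d i ≠ 0)
    (h : (of fun i j => A i j / (d i * d j)).PosDef) : A.PosDef := by
  have hA : A = diagonal d * (of fun i j => A i j / (d i * d j)) * star (diagonal d) := by
    ext i j
    rw [star_eq_conjTranspose, diagonal_conjTranspose, star_trivial, mul_diagonal, diagonal_mul,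
      of_apply]
    field_simp [hd i, hd j]
  have hD : IsUnit (diagonal d) := isUnit_diagonal.mpr (Pi.isUnit_iff.mpr fun i => (hd i).isUnit)
  rwa [hA, hD.posDef_star_right_conjugate_iff]

theorem Finset.sum_lt_one_of_card_mul_lt_one {ι : Type*} {s : Finset ι} {f : ι → ℝ}
    (h : ∀ j ∈ s, (#s : ℝ) * f j < 1) : ∑ j ∈ s, f j < 1 := by
  rcases s.eq_empty_or_nonempty with rfl | hs
  · simp
  have hcard : (0 : ℝ) < #s := by exact_mod_cast hs.card_pos
  calc ∑ j ∈ s, f j < ∑ _j ∈ s, (#s : ℝ)⁻¹ * 1 :=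
        sum_lt_sum_of_nonempty hs fun j hj => (lt_inv_mul_iff₀ hcard).mpr (h j hj)
    _ = 1 := by rw [sum_const, nsmul_eq_mul, mul_one, mul_inv_cancel₀ hcard.ne']

theorem posDef_of_diag_domination_general (n : ℕ)
    (A : Matrix (Fin n) (Fin n) ℝ) (hsym : A.IsSymm)
    (hdiag : ∀ i, 0 < A i i)
    (hdom : ∀ i j, i ≠ j → ((n : ℝ) - 1) * |A i j| < Real.sqrt (A i i * A j j)) :
    A.PosDef := by
  have hd : ∀ i, 0 < √(A i i) := fun i => Real.sqrt_pos.mpr (hdiag i)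
  refine PosDef.of_posDef_div_mul (fun i => (hd i).ne') ?_
  refine IsHermitian.posDef_of_sum_norm_offDiag_lt ?_ fun i => ?_
  · refine IsHermitian.ext fun i j => ?_
    rw [star_trivial, of_apply, of_apply, hsym.apply i j, mul_comm]
  have hunit : A i i / (√(A i i) * √(A i i)) = 1 := by
    rw [Real.mul_self_sqrt (hdiag i).le, div_self (hdiag i).ne']
  rw [of_apply, hunit, RCLike.one_re]
  refine sum_lt_one_of_card_mul_lt_one fun j hj => ?_
  rw [card_erase_of_mem (mem_univ i), card_univ, Fintype.card_fin, Nat.cast_pred i.pos, of_apply,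
    Real.norm_eq_abs, abs_div, abs_of_pos (mul_pos (hd i) (hd j)), mul_div_assoc',
    div_lt_one (mul_pos (hd i) (hd j)), ← Real.sqrt_mul (hdiag i).le]
  exact hdom i j (ne_of_mem_erase hj).symm

theorem posDef_of_diag_domination (n : ℕ) (hn : 1 ≤ n)
    (A : Matrix (Fin n) (Fin n) ℝ) (hsym : A.IsSymm)
    (hdiag : ∀ i, 0 < A i i)
    (hdom : ∀ i j, i ≠ j → ((n : ℝ) - 1) * |A i j| < Real.sqrt (A i i * A j j)) :
    A.PosDef :=
  posDef_of_diag_domination_general n A hsym hdiag hdom
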